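/- Let d ≥ 1, C_g > 0, λ ≥ C_g², T ≥ 1, and let g_1, …, g_T ∈ ℝ^d satisfy ‖g_t‖₂ ≤ C_g for all 1 ≤ t ≤ T. For 1 ≤ t ≤ T define Σ_t = λI + Σ_{i=1}^{t-1} g_i g_iᵀ and u_t = ‖g_t‖_{Σ_t^{-1}}. Then Σ_{t=1}^T u_t² ≤ 2d · log(1 + T·C_g² / (d·λ)). -/

import Mathlib

/-!
By the matrix determinant lemma `det Σ_{t+1} = det Σ_t · (1 + u_t²)`, so
`∏_t (1 + u_t²) = det Σ_{T+1} / λ^d`. AM–GM on the eigenvalues of `Σ_{T+1}` bounds its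
determinant by `(tr Σ_{T+1} / d)^d ≤ (λ + T C_g² / d)^d`. Finally `Σ_t ≥ λ I` gives
`u_t² ≤ ‖g_t‖² / λ ≤ 1`, and on `[0, 2]` one has `x ≤ 2 log (1 + x)`.
-/

open Matrix Finset

theorem Real.le_two_mul_log_one_add {x : ℝ} (hx₀ : 0 ≤ x) (hx₂ : x ≤ 2) :
    x ≤ 2 * Real.log (1 + x) := by
  have h := Real.le_log_one_add_of_nonneg hx₀
  rw [div_le_iff₀ (by linarith)] at h
  nlinarith

theorem Real.sum_le_two_mul_log_prod_one_add {ι : Type*} (s : Finset ι) (x : ι → ℝ)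
    (hx₀ : ∀ i ∈ s, 0 ≤ x i) (hx₂ : ∀ i ∈ s, x i ≤ 2) :
    ∑ i ∈ s, x i ≤ 2 * Real.log (∏ i ∈ s, (1 + x i)) := by
  rw [Real.log_prod fun i hi ↦ by linarith [hx₀ i hi], mul_sum]
  exact sum_le_sum fun i hi ↦ Real.le_two_mul_log_one_add (hx₀ i hi) (hx₂ i hi)

theorem Real.prod_le_sum_div_card_pow {ι : Type*} (s : Finset ι) (f : ι → ℝ)
    (hf : ∀ i ∈ s, 0 ≤ f i) : ∏ i ∈ s, f i ≤ ((∑ i ∈ s, f i) / #s) ^ #s := by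
  rcases s.eq_empty_or_nonempty with rfl | hs
  · simp
  have hcard : (0 : ℝ) < #s := by exact_mod_cast hs.card_pos
  have hgm := Real.geom_mean_le_arith_mean s (fun _ ↦ 1) f (by simp) (by simpa using hcard) hf
  simp only [Real.rpow_one, one_mul, sum_const, nsmul_eq_mul, mul_one] at hgm
  have hprod : 0 ≤ ∏ i ∈ s, f i := prod_nonneg hf
  calc ∏ i ∈ s, f i = ((∏ i ∈ s, f i) ^ (#s : ℝ)⁻¹) ^ #s := by
        rw [← Real.rpow_natCast, ← Real.rpow_mul hprod, inv_mul_cancel₀ hcard.ne', Real.rpow_one]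
    _ ≤ ((∑ i ∈ s, f i) / #s) ^ #s := by gcongr

namespace Matrix

variable {n : Type*} [Fintype n] [DecidableEq n]

theorem PosSemidef.det_le_trace_div_card_pow {A : Matrix n n ℝ} (hA : A.PosSemidef) :
    A.det ≤ (A.trace / Fintype.card n) ^ Fintype.card n := by
  rw [hA.1.det_eq_prod_eigenvalues, hA.1.trace_eq_sum_eigenvalues]
  simpa using Real.prod_le_sum_div_card_pow univ _ fun i _ ↦ hA.eigenvalues_nonneg i

omit [DecidableEq n] in
theorem posSemidef_sum_vecMulVec_self {ι : Type*} (s : Finset ι) (g : ι → n → ℝ) :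
    (∑ i ∈ s, vecMulVec (g i) (g i)).PosSemidef :=
  posSemidef_sum s fun i _ ↦ by simpa using posSemidef_vecMulVec_self_star (g i)

theorem det_add_vecMulVec {α : Type*} [CommRing α] {A : Matrix n n α} (hA : IsUnit A.det)
    (u v : n → α) : (A + vecMulVec u v).det = A.det * (1 + v ⬝ᵥ (A⁻¹ *ᵥ u)) := by
  rw [vecMulVec_eq Unit, det_add_replicateCol_mul_replicateRow hA, det_unique (n := Unit),
    Matrix.mul_assoc, ← replicateCol_mulVec, add_apply, one_apply_eq,
    replicateRow_mul_replicateCol_apply]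

theorem det_eq_det_mul_prod_of_succ_eq_add_vecMulVec {α : Type*} [CommRing α]
    {A : ℕ → Matrix n n α} {u v : ℕ → n → α} {m : ℕ} (hA : ∀ t, m ≤ t → IsUnit (A t).det)
    (hstep : ∀ t, m ≤ t → A (t + 1) = A t + vecMulVec (u t) (v t)) {k : ℕ} (hk : m ≤ k) :
    (A k).det = (A m).det * ∏ t ∈ Ico m k, (1 + v t ⬝ᵥ ((A t)⁻¹ *ᵥ u t)) := by
  induction k, hk using Nat.le_induction with
  | base => simp
  | succ k hk ih =>
    rw [hstep k hk, det_add_vecMulVec (hA k hk), ih, prod_Ico_succ_top hk, mul_assoc]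

/-- Since `A ≥ λ I`, the vector `y = A⁻¹ v` satisfies `λ ‖y‖² ≤ ⟪v, y⟫`; expanding
`0 ≤ ‖λ y - v‖²` then gives `λ ⟪v, y⟫ ≤ ‖v‖²`. -/
theorem dotProduct_inv_smul_one_add_mulVec_le {lam : ℝ} (hlam : 0 < lam) {P : Matrix n n ℝ}
    (hP : P.PosSemidef) (v : n → ℝ) : v ⬝ᵥ ((lam • 1 + P)⁻¹ *ᵥ v) ≤ v ⬝ᵥ v / lam := by
  have hA : (lam • (1 : Matrix n n ℝ) + P).PosDef := (PosDef.one.smul hlam).add_posSemidef hP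
  set y := (lam • 1 + P)⁻¹ *ᵥ v
  have hAy : (lam • 1 + P) *ᵥ y = v := by
    rw [mulVec_mulVec, mul_nonsing_inv _ hA.det_pos.ne'.isUnit, one_mulVec]
  have hPy : 0 ≤ y ⬝ᵥ (P *ᵥ y) := by simpa using hP.dotProduct_mulVec_nonneg y
  have hyAy : lam * (y ⬝ᵥ y) + y ⬝ᵥ (P *ᵥ y) = v ⬝ᵥ y := by
    rw [← hAy, add_mulVec, smul_mulVec, one_mulVec, add_dotProduct, smul_dotProduct, smul_eq_mul,
      dotProduct_comm (P *ᵥ y)]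
  have hsq : 0 ≤ (lam • y - v) ⬝ᵥ (lam • y - v) := by
    simpa using (PosSemidef.one (n := n) (R := ℝ)).dotProduct_mulVec_nonneg (lam • y - v)
  simp only [sub_dotProduct, dotProduct_sub, smul_dotProduct, dotProduct_smul, smul_eq_mul,
    dotProduct_comm y v] at hsq
  rw [le_div_iff₀ hlam]
  nlinarith

end Matrix

section RegularizedGram

variable {n : Type*} [Fintype n] [DecidableEq n] {lam : ℝ} (g : ℕ → n → ℝ)

def regularizedGram (lam : ℝ) (g : ℕ → n → ℝ) (t : ℕ) : Matrix n n ℝ :=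
  lam • 1 + ∑ i ∈ Ico 1 t, vecMulVec (g i) (g i)

theorem posDef_regularizedGram (hlam : 0 < lam) (t : ℕ) : (regularizedGram lam g t).PosDef :=
  (PosDef.one.smul hlam).add_posSemidef (posSemidef_sum_vecMulVec_self _ g)

theorem trace_regularizedGram (t : ℕ) :
    (regularizedGram lam g t).trace = Fintype.card n * lam + ∑ i ∈ Ico 1 t, g i ⬝ᵥ g i := by
  simp [regularizedGram, trace_sum, mul_comm]

theorem det_regularizedGram_succ (hlam : 0 < lam) (T : ℕ) :
    (regularizedGram lam g (T + 1)).det = lam ^ Fintype.card n *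
      ∏ t ∈ Icc 1 T, (1 + g t ⬝ᵥ ((regularizedGram lam g t)⁻¹ *ᵥ g t)) := by
  have hstep : ∀ t, 1 ≤ t → regularizedGram lam g (t + 1) =
      regularizedGram lam g t + vecMulVec (g t) (g t) := fun t ht ↦ by
    rw [regularizedGram, regularizedGram, sum_Ico_succ_top ht, add_assoc]
  rw [det_eq_det_mul_prod_of_succ_eq_add_vecMulVec
    (fun t _ ↦ (posDef_regularizedGram g hlam t).det_pos.ne'.isUnit) hstep (by omega : 1 ≤ T + 1)]
  simp [regularizedGram, Ico_add_one_right_eq_Icc]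

theorem prod_one_add_dotProduct_inv_regularizedGram_le (hlam : 0 < lam) (T : ℕ) :
    ∏ t ∈ Icc 1 T, (1 + g t ⬝ᵥ ((regularizedGram lam g t)⁻¹ *ᵥ g t)) ≤
      (1 + (∑ t ∈ Icc 1 T, g t ⬝ᵥ g t) / (Fintype.card n * lam)) ^ Fintype.card n := by
  rcases (Fintype.card n).eq_zero_or_pos with hn | hn
  · have : IsEmpty n := Fintype.card_eq_zero_iff.1 hn
    simp [dotProduct]
  rw [← mul_le_mul_iff_right₀ (pow_pos hlam (Fintype.card n)), ← det_regularizedGram_succ g hlam,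
    ← mul_pow]
  calc (regularizedGram lam g (T + 1)).det
      ≤ ((regularizedGram lam g (T + 1)).trace / Fintype.card n) ^ Fintype.card n :=
        (posDef_regularizedGram g hlam _).posSemidef.det_le_trace_div_card_pow
    _ = (lam * (1 + (∑ t ∈ Icc 1 T, g t ⬝ᵥ g t) / (Fintype.card n * lam))) ^ Fintype.card n := by
        rw [trace_regularizedGram, Ico_add_one_right_eq_Icc]
        field_simp

end RegularizedGram

theorem sum_sq_elliptical_potential_general
    (d : ℕ) (Cg lam : ℝ) (hCg : 0 < Cg) (hlam : Cg ^ 2 ≤ lam)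
    (T : ℕ) (g : ℕ → Fin d → ℝ)
    (hg : ∀ t, 1 ≤ t → t ≤ T → Real.sqrt (g t ⬝ᵥ g t) ≤ Cg)
    (S : ℕ → Matrix (Fin d) (Fin d) ℝ)
    (hS : ∀ t, S t = lam • (1 : Matrix (Fin d) (Fin d) ℝ) +
      ∑ i ∈ Finset.Ico 1 t, vecMulVec (g i) (g i))
    (u : ℕ → ℝ)
    (hu : ∀ t, u t = Real.sqrt (g t ⬝ᵥ ((S t)⁻¹ *ᵥ g t))) :
    ∑ t ∈ Finset.Icc 1 T, u t ^ 2 ≤ 2 * d * Real.log (1 + T * Cg ^ 2 / (d * lam)) := by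
  have hlam₀ : 0 < lam := (by positivity : 0 < Cg ^ 2).trans_le hlam
  obtain rfl : S = regularizedGram lam g := funext hS
  obtain rfl : u = fun t ↦ √(g t ⬝ᵥ ((regularizedGram lam g t)⁻¹ *ᵥ g t)) := funext hu
  set q := fun t ↦ g t ⬝ᵥ ((regularizedGram lam g t)⁻¹ *ᵥ g t)
  have hq₀ (t : ℕ) : 0 ≤ q t := by
    simpa using (posDef_regularizedGram g hlam₀ t).inv.posSemidef.dotProduct_mulVec_nonneg (g t)
  have hgg (t : ℕ) (ht : t ∈ Icc 1 T) : g t ⬝ᵥ g t ≤ Cg ^ 2 :=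
    (Real.sqrt_le_left hCg.le).1 (hg t (mem_Icc.1 ht).1 (mem_Icc.1 ht).2)
  have hq₂ (t : ℕ) (ht : t ∈ Icc 1 T) : q t ≤ 2 := calc
    q t ≤ g t ⬝ᵥ g t / lam :=
      dotProduct_inv_smul_one_add_mulVec_le hlam₀ (posSemidef_sum_vecMulVec_self _ g) (g t)
    _ ≤ 2 := by rw [div_le_iff₀ hlam₀]; linarith [hgg t ht]
  have hsum : ∑ t ∈ Icc 1 T, g t ⬝ᵥ g t ≤ T * Cg ^ 2 := by
    simpa using sum_le_card_nsmul _ _ _ hgg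
  have hsum₀ : 0 ≤ ∑ t ∈ Icc 1 T, g t ⬝ᵥ g t :=
    sum_nonneg fun t _ ↦ by simpa using dotProduct_self_star_nonneg (g t)
  have hpotential := prod_one_add_dotProduct_inv_regularizedGram_le g hlam₀ T
  rw [Fintype.card_fin] at hpotential
  calc ∑ t ∈ Icc 1 T, √(q t) ^ 2 = ∑ t ∈ Icc 1 T, q t := by simp_rw [Real.sq_sqrt (hq₀ _)]
    _ ≤ 2 * Real.log (∏ t ∈ Icc 1 T, (1 + q t)) :=
      Real.sum_le_two_mul_log_prod_one_add _ q (fun t _ ↦ hq₀ t) hq₂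
    _ ≤ 2 * Real.log ((1 + T * Cg ^ 2 / (d * lam)) ^ d) := by
      gcongr
      · exact prod_pos fun t _ ↦ by linarith [hq₀ t]
      · exact hpotential.trans (by gcongr)
    _ = 2 * d * Real.log (1 + T * Cg ^ 2 / (d * lam)) := by rw [Real.log_pow]; ring

/-- Elliptical potential lemma: with `λ ≥ C_g²`, `Σ_t = λI + ∑_{i=1}^{t-1} g_i g_iᵀ`
and `u_t = ‖g_t‖_{Σ_t⁻¹}`, one has `∑_{t=1}^T u_t² ≤ 2 d log(1 + T C_g²/(d λ))`. -/
theorem sum_sq_elliptical_potential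
    (d : ℕ) (hd : 1 ≤ d) (Cg lam : ℝ) (hCg : 0 < Cg) (hlam : Cg ^ 2 ≤ lam)
    (T : ℕ) (hT : 1 ≤ T) (g : ℕ → Fin d → ℝ)
    (hg : ∀ t, 1 ≤ t → t ≤ T → Real.sqrt (g t ⬝ᵥ g t) ≤ Cg)
    (S : ℕ → Matrix (Fin d) (Fin d) ℝ)
    (hS : ∀ t, S t = lam • (1 : Matrix (Fin d) (Fin d) ℝ) +
      ∑ i ∈ Finset.Ico 1 t, vecMulVec (g i) (g i))
    (u : ℕ → ℝ)
    (hu : ∀ t, u t = Real.sqrt (g t ⬝ᵥ ((S t)⁻¹ *ᵥ g t))) :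
    ∑ t ∈ Finset.Icc 1 T, u t ^ 2 ≤ 2 * d * Real.log (1 + T * Cg ^ 2 / (d * lam)) :=
  sum_sq_elliptical_potential_general d Cg lam hCg hlam T g hg S hS u hu
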